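/- Fix θ₁, θ₂ ∈ ℝ with θ₁ ≠ θ₂. Then C is strictly increasing in each argument when the other argument is strictly positive: if β > 0 and 0 ≤ ψ' < ψ'' then C(β, ψ') < C(β, ψ''), and if ψ > 0 and 0 ≤ β' < β'' then C(β', ψ) < C(β'', ψ). -/

import Mathlib

/-!
Write `f_{β,ψ}(x) = β·d(θ₁, x) + ψ·d(θ₂, x)`. By Darboux's theorem `A'` attains the weighted mean
of `A'(θ₁)` and `A'(θ₂)` at some `x₀`, and the Bregman three-point identity
`f_{β,ψ}(x) = f_{β,ψ}(x₀) + (β + ψ)·d(x₀, x)` shows that `x₀` minimises `f_{β,ψ}`, so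
`C(β, ψ) = f_{β,ψ}(x₀)`. When `β > 0` and `θ₁ ≠ θ₂`, injectivity of `A'` forces `x₀ ≠ θ₂`, so
`d(θ₂, x₀) > 0` and lowering `ψ` strictly lowers `f` at `x₀`, hence `C`. The second claim is the
first with the roles of `θ₁` and `θ₂` swapped.
-/

open Set

/-- Kullback–Leibler divergence in a one-dimensional exponential family with
log-partition function `A`: `d(θ, x) = (θ - x)·A'(θ) - A(θ) + A(x)`. -/
noncomputable def dKL (A : ℝ → ℝ) (θ x : ℝ) : ℝ := (θ - x) * deriv A θ - A θ + A x

/-- `C(β, ψ) = inf_{x ∈ ℝ} β·d(θ₁, x) + ψ·d(θ₂, x)`. -/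
noncomputable def Cfun (A : ℝ → ℝ) (θ₁ θ₂ β ψ : ℝ) : ℝ :=
  ⨅ x : ℝ, (β * dKL A θ₁ x + ψ * dKL A θ₂ x)

lemma StrictConvexOn.add_mul_deriv_lt {A : ℝ → ℝ} (hconv : StrictConvexOn ℝ univ A) {θ x : ℝ}
    (hA : DifferentiableAt ℝ A θ) (h : x ≠ θ) : A θ + (x - θ) * deriv A θ < A x := by
  rcases h.lt_or_gt with hx | hx
  · have := hconv.slope_lt_deriv (mem_univ x) (mem_univ θ) hx hA
    rw [slope_def_field, div_lt_iff₀ (by linarith)] at this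
    nlinarith
  · have := hconv.deriv_lt_slope (mem_univ θ) (mem_univ x) hx hA
    rw [slope_def_field, lt_div_iff₀ (by linarith)] at this
    nlinarith

lemma dKL_pos {A : ℝ → ℝ} (hconv : StrictConvexOn ℝ univ A) {θ x : ℝ}
    (hA : DifferentiableAt ℝ A θ) (h : x ≠ θ) : 0 < dKL A θ x := by
  have := hconv.add_mul_deriv_lt hA h
  unfold dKL
  linarith

lemma dKL_nonneg {A : ℝ → ℝ} (hconv : StrictConvexOn ℝ univ A) {θ : ℝ}
    (hA : DifferentiableAt ℝ A θ) (x : ℝ) : 0 ≤ dKL A θ x := by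
  rcases eq_or_ne x θ with rfl | h
  · simp [dKL]
  · exact (dKL_pos hconv hA h).le

lemma weighted_dKL_eq_add_dKL {A : ℝ → ℝ} {θ₁ θ₂ β ψ x₀ : ℝ}
    (hx₀ : (β + ψ) * deriv A x₀ = β * deriv A θ₁ + ψ * deriv A θ₂) (x : ℝ) :
    β * dKL A θ₁ x + ψ * dKL A θ₂ x =
      β * dKL A θ₁ x₀ + ψ * dKL A θ₂ x₀ + (β + ψ) * dKL A x₀ x := by
  have := congrArg ((x₀ - x) * ·) hx₀
  simp only [dKL] at this ⊢
  linear_combination -this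

lemma exists_deriv_eq_weighted_mean {A : ℝ → ℝ} (hA : Differentiable ℝ A) (θ₁ θ₂ : ℝ)
    {β ψ : ℝ} (hβ : 0 ≤ β) (hψ : 0 ≤ ψ) (hβψ : 0 < β + ψ) :
    ∃ x₀, (β + ψ) * deriv A x₀ = β * deriv A θ₁ + ψ * deriv A θ₂ := by
  have hmem := convex_univ.image_deriv (fun x _ => hA x)
    (mem_image_of_mem (deriv A) (mem_univ θ₁)) (mem_image_of_mem (deriv A) (mem_univ θ₂))
    (div_nonneg hβ hβψ.le) (div_nonneg hψ hβψ.le) (by field_simp)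
  obtain ⟨x₀, -, hx₀⟩ := hmem
  refine ⟨x₀, ?_⟩
  rw [hx₀, smul_eq_mul, smul_eq_mul]
  field_simp

lemma Cfun_le {A : ℝ → ℝ} (hA : Differentiable ℝ A) (hconv : StrictConvexOn ℝ univ A)
    (θ₁ θ₂ : ℝ) {β ψ : ℝ} (hβ : 0 ≤ β) (hψ : 0 ≤ ψ) (x : ℝ) :
    Cfun A θ₁ θ₂ β ψ ≤ β * dKL A θ₁ x + ψ * dKL A θ₂ x := by
  refine ciInf_le ⟨0, ?_⟩ x
  rintro _ ⟨y, rfl⟩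
  exact add_nonneg (mul_nonneg hβ (dKL_nonneg hconv (hA θ₁) y))
    (mul_nonneg hψ (dKL_nonneg hconv (hA θ₂) y))

lemma Cfun_eq_of_deriv_eq_weighted_mean {A : ℝ → ℝ} (hA : Differentiable ℝ A)
    (hconv : StrictConvexOn ℝ univ A) {θ₁ θ₂ β ψ x₀ : ℝ} (hβ : 0 ≤ β) (hψ : 0 ≤ ψ)
    (hx₀ : (β + ψ) * deriv A x₀ = β * deriv A θ₁ + ψ * deriv A θ₂) :
    Cfun A θ₁ θ₂ β ψ = β * dKL A θ₁ x₀ + ψ * dKL A θ₂ x₀ := by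
  refine le_antisymm (Cfun_le hA hconv θ₁ θ₂ hβ hψ x₀) (le_ciInf fun x => ?_)
  rw [weighted_dKL_eq_add_dKL hx₀ x]
  exact le_add_of_nonneg_right
    (mul_nonneg (add_nonneg hβ hψ) (dKL_nonneg hconv (hA x₀) x))

lemma Cfun_comm (A : ℝ → ℝ) (θ₁ θ₂ β ψ : ℝ) : Cfun A θ₁ θ₂ β ψ = Cfun A θ₂ θ₁ ψ β := by
  simp only [Cfun, add_comm]

lemma Cfun_strictMonoOn_right {A : ℝ → ℝ} (hA : Differentiable ℝ A)
    (hconv : StrictConvexOn ℝ univ A) {θ₁ θ₂ : ℝ} (hne : θ₁ ≠ θ₂) {β : ℝ} (hβ : 0 < β) :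
    StrictMonoOn (Cfun A θ₁ θ₂ β) (Ici 0) := by
  intro ψ' hψ' ψ'' _ hlt
  have hψ'' : 0 ≤ ψ'' := (mem_Ici.mp hψ').trans hlt.le
  obtain ⟨x₀, hx₀⟩ := exists_deriv_eq_weighted_mean hA θ₁ θ₂ hβ.le hψ'' (by positivity)
  have hx₀_ne : x₀ ≠ θ₂ := by
    rintro rfl
    have hderiv : β * deriv A x₀ = β * deriv A θ₁ := by linarith
    exact hne ((hconv.strictMonoOn_deriv fun x _ => hA x).injOn (mem_univ _) (mem_univ _)
      (mul_left_cancel₀ hβ.ne' hderiv)).symm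
  have hd : 0 < dKL A θ₂ x₀ := dKL_pos hconv (hA θ₂) hx₀_ne
  calc Cfun A θ₁ θ₂ β ψ' ≤ β * dKL A θ₁ x₀ + ψ' * dKL A θ₂ x₀ :=
        Cfun_le hA hconv θ₁ θ₂ hβ.le hψ' x₀
    _ < β * dKL A θ₁ x₀ + ψ'' * dKL A θ₂ x₀ := by gcongr
    _ = Cfun A θ₁ θ₂ β ψ'' := (Cfun_eq_of_deriv_eq_weighted_mean hA hconv hβ.le hψ'' hx₀).symm

/-- If `θ₁ ≠ θ₂`, then `C` is strictly increasing in each argument when the other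
argument is strictly positive. -/
theorem stmt_4 (A : ℝ → ℝ) (hA : Differentiable ℝ A)
    (hconv : StrictConvexOn ℝ (Set.univ : Set ℝ) A)
    (θ₁ θ₂ : ℝ) (hne : θ₁ ≠ θ₂) :
    (∀ β ψ' ψ'' : ℝ, 0 < β → 0 ≤ ψ' → ψ' < ψ'' →
      Cfun A θ₁ θ₂ β ψ' < Cfun A θ₁ θ₂ β ψ'') ∧
    (∀ ψ β' β'' : ℝ, 0 < ψ → 0 ≤ β' → β' < β'' →
      Cfun A θ₁ θ₂ β' ψ < Cfun A θ₁ θ₂ β'' ψ) := by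
  refine ⟨fun β ψ' ψ'' hβ hψ' hlt => ?_, fun ψ β' β'' hψ hβ' hlt => ?_⟩
  · exact Cfun_strictMonoOn_right hA hconv hne hβ hψ' (mem_Ici.mpr (hψ'.trans hlt.le)) hlt
  · rw [Cfun_comm A θ₁, Cfun_comm A θ₁]
    exact Cfun_strictMonoOn_right hA hconv hne.symm hψ hβ' (mem_Ici.mpr (hβ'.trans hlt.le)) hlt
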